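/- For i = 1,2 and a = a(c_i): ℙ_z(τ_a < ∞) = 1 for every z ∈ K; equivalently 𝔼_z[e^{a·(S(τ)−z)}; τ < ∞] = 1. -/

import Mathlib

/-!
Since `a = a(cᵢ)` lies on `∂D`, the steps of the twisted walk have law `γ(ξ) e^{a·ξ}` of total mass
`φ(a) = 1`, and since `∇φ(a)` is parallel to `cᵢ ⊥ fᵢ`, the projection `fᵢ·S_a` has zero drift. By
irreducibility it then has a step `ξ₀` with `fᵢ·ξ₀ < 0`, and such a walk leaves the half-plane
`{fᵢ·x > 0} ⊇ K` almost surely. Indeed, by Jensen `exp (-l fᵢ·x)` is a submartingale of the walk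
killed outside the half-plane, up to the exit probability and an overshoot error of order `l`,
whose sum along the walk is finite because from height `kε` the walk leaves within `k` steps with
probability `≥ γ_a(ξ₀)^k`. Comparing with the survivors far from the boundary gives
`(1 - e⁻¹) ℙ(τ = ∞) = O(l)` for every `l ∈ (0, 1]`. The second identity is the first one after the
exponential change of measure `p_a(z,z') = p(z,z') e^{a·(z'-z)}`.
-/

open scoped ENNReal Classical

noncomputable section

namespace KilledRW

/-- The two-dimensional integer lattice. -/
abbrev Z2 := ℤ × ℤ

/-- The plane `ℝ²`. -/
abbrev R2 := ℝ × ℝ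

/-- Euclidean dot product on `ℝ²`. -/
def dotR (a b : R2) : ℝ := a.1 * b.1 + a.2 * b.2

/-- Embedding of the lattice into the plane. -/
def emb (z : Z2) : R2 := ((z.1 : ℝ), (z.2 : ℝ))

/-- Euclidean norm on `ℝ²`. -/
def nrm (x : R2) : ℝ := Real.sqrt (dotR x x)

/-- The jump generating function `φ(a) = Σ_z γ(z) e^{a·z}`. -/
def jgf (γ : Z2 → ℝ) (a : R2) : ℝ := ∑' z : Z2, γ z * Real.exp (dotR a (emb z))

/-- The gradient `∇φ(a) = Σ_z z γ(z) e^{a·z}` of the jump generating function. -/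
def gradJgf (γ : Z2 → ℝ) (a : R2) : R2 :=
  (∑' z : Z2, γ z * Real.exp (dotR a (emb z)) * (z.1 : ℝ),
   ∑' z : Z2, γ z * Real.exp (dotR a (emb z)) * (z.2 : ℝ))

/-- The normalized gradient `q(a) = ∇φ(a)/|∇φ(a)|`. -/
def qmap (γ : Z2 → ℝ) (a : R2) : R2 := (nrm (gradJgf γ a))⁻¹ • gradJgf γ a

/-- (Sub)stochastic transition kernel of the twisted random walk `S_a`:
`p_a(z,z') = γ(z'-z) e^{a·(z'-z)}`.  For `a = 0` this is the kernel of the original walk. -/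
def twKer (γ : Z2 → ℝ) (a : R2) (z z' : Z2) : ℝ≥0∞ :=
  ENNReal.ofReal (γ (z' - z) * Real.exp (dotR a (emb (z' - z))))

/-- `n`-step transition probabilities of the (sub)stochastic kernel `κ`. -/
def nstep (κ : Z2 → Z2 → ℝ≥0∞) : ℕ → Z2 → Z2 → ℝ≥0∞
  | 0, z, z' => if z' = z then 1 else 0
  | n + 1, z, z' => ∑' w : Z2, κ z w * nstep κ n w z'

/-- `exitP κ A n z z' = ℙ_z(τ_A = n, S(n) = z')`: the probability that the walk with kernel `κ`
started at `z` stays in `A` strictly before time `n` and is at `z' ∉ A` at time `n`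
(where `τ_A = inf{n ≥ 0 : S(n) ∉ A}`). -/
def exitP (κ : Z2 → Z2 → ℝ≥0∞) (A : Set Z2) : ℕ → Z2 → Z2 → ℝ≥0∞
  | 0, z, z' => if z' = z ∧ z ∉ A then 1 else 0
  | n + 1, z, z' => if z ∈ A then ∑' w : Z2, κ z w * exitP κ A n w z' else 0

/-- `aliveP κ A n z z' = ℙ_z(τ_A > n, S(n) = z')`. -/
def aliveP (κ : Z2 → Z2 → ℝ≥0∞) (A : Set Z2) : ℕ → Z2 → Z2 → ℝ≥0∞
  | 0, z, z' => if z' = z ∧ z ∈ A then 1 else 0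
  | n + 1, z, z' => if z ∈ A then ∑' w : Z2, κ z w * aliveP κ A n w z' else 0

/-- `ℙ_z(τ_A < ∞)` for the walk with kernel `κ`. -/
def exitTotal (κ : Z2 → Z2 → ℝ≥0∞) (A : Set Z2) (z : Z2) : ℝ≥0∞ :=
  ∑' n : ℕ, ∑' z' : Z2, exitP κ A n z z'

/-- `𝔼_z[g(S(τ_A)); τ_A < ∞]` for a nonnegative integrand, with values in `ℝ≥0∞`. -/
def exitLExp (κ : Z2 → Z2 → ℝ≥0∞) (A : Set Z2) (z : Z2) (g : Z2 → ℝ) : ℝ≥0∞ :=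
  ∑' n : ℕ, ∑' z' : Z2, exitP κ A n z z' * ENNReal.ofReal (g z')

/-- `𝔼_z[g(S(τ_A)); τ_A < ∞]` for a signed integrand (positive part minus negative part). -/
def exitExp (κ : Z2 → Z2 → ℝ≥0∞) (A : Set Z2) (z : Z2) (g : Z2 → ℝ) : ℝ :=
  (exitLExp κ A z g).toReal - (exitLExp κ A z fun w => -g w).toReal

/-- `𝔼_z[g(S(τ_A)); τ_A ≤ n]`, nonnegative version. -/
def exitLExpTrunc (κ : Z2 → Z2 → ℝ≥0∞) (A : Set Z2) (z : Z2) (g : Z2 → ℝ) (n : ℕ) : ℝ≥0∞ :=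
  ∑ m ∈ Finset.range (n + 1), ∑' z' : Z2, exitP κ A m z z' * ENNReal.ofReal (g z')

/-- `𝔼_z[g(S(τ_A)); τ_A ≤ n]`, signed version. -/
def exitExpTrunc (κ : Z2 → Z2 → ℝ≥0∞) (A : Set Z2) (z : Z2) (g : Z2 → ℝ) (n : ℕ) : ℝ :=
  (exitLExpTrunc κ A z g n).toReal - (exitLExpTrunc κ A z (fun w => -g w) n).toReal

/-- `𝔼_z[g(S(n)); τ_A > n]`, nonnegative version. -/
def aliveLExpAt (κ : Z2 → Z2 → ℝ≥0∞) (A : Set Z2) (z : Z2) (g : Z2 → ℝ) (n : ℕ) : ℝ≥0∞ :=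
  ∑' z' : Z2, aliveP κ A n z z' * ENNReal.ofReal (g z')

/-- `𝔼_z[g(S(n)); τ_A > n]`, signed version. -/
def aliveExpAt (κ : Z2 → Z2 → ℝ≥0∞) (A : Set Z2) (z : Z2) (g : Z2 → ℝ) (n : ℕ) : ℝ :=
  (aliveLExpAt κ A z g n).toReal - (aliveLExpAt κ A z (fun w => -g w) n).toReal

theorem tsum_le_of_add_le_shift {u b : ℕ → ℝ≥0∞} (k : ℕ) (hu : ∀ n, u n ≤ 1)
    (h : ∀ n, u (n + k) + b n ≤ u n) : ∑' n, b n ≤ k := by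
  rw [ENNReal.tsum_eq_iSup_nat]
  refine iSup_le fun N => ?_
  have hfin : ∑ n ∈ Finset.range N, u (k + n) ≠ ∞ :=
    ENNReal.sum_ne_top.2 fun n _ => ((hu _).trans_lt ENNReal.one_lt_top).ne
  have hle : ∑ n ∈ Finset.range N, b n + ∑ n ∈ Finset.range N, u (k + n)
      ≤ ∑ n ∈ Finset.range k, u n + ∑ n ∈ Finset.range N, u (k + n) :=
    calc ∑ n ∈ Finset.range N, b n + ∑ n ∈ Finset.range N, u (k + n)
        = ∑ n ∈ Finset.range N, (u (n + k) + b n) := by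
          rw [Finset.sum_add_distrib, add_comm]; simp only [add_comm k]
      _ ≤ ∑ n ∈ Finset.range N, u n := Finset.sum_le_sum fun n _ => h n
      _ ≤ ∑ n ∈ Finset.range (k + N), u n :=
          Finset.sum_le_sum_of_subset (Finset.range_subset_range.2 (Nat.le_add_left N k))
      _ = _ := Finset.sum_range_add u k N
  calc ∑ n ∈ Finset.range N, b n ≤ ∑ n ∈ Finset.range k, u n :=
        ENNReal.le_of_add_le_add_right hfin hle
    _ ≤ (Finset.range k).card • 1 := Finset.sum_le_card_nsmul _ _ _ fun n _ => hu n
    _ = k := by simp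

theorem add_le_add_add_sum_of_succ {a b d : ℕ → ℝ≥0∞} (ha : ∀ n, a n ≠ ∞)
    (h : ∀ n, a n + b (n + 1) ≤ a (n + 1) + b n + d n) (N : ℕ) :
    a 0 + b N ≤ a N + b 0 + ∑ n ∈ Finset.range N, d n := by
  induction N with
  | zero => simp
  | succ N ih =>
    refine ENNReal.le_of_add_le_add_right (ha N) ?_
    calc a 0 + b (N + 1) + a N = a N + b (N + 1) + a 0 := by ring
      _ ≤ a (N + 1) + b N + d N + a 0 := add_le_add (h N) le_rfl
      _ = a (N + 1) + d N + (a 0 + b N) := by ring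
      _ ≤ a (N + 1) + d N + (a N + b 0 + ∑ n ∈ Finset.range N, d n) := by gcongr
      _ = _ := by rw [Finset.sum_range_succ]; ring

theorem eq_zero_of_forall_le_ofReal_mul {x C : ℝ≥0∞} (hC : C ≠ ∞)
    (h : ∀ l : ℝ, 0 < l → l ≤ 1 → x ≤ ENNReal.ofReal l * C) : x = 0 := by
  have hlim : Filter.Tendsto (fun l : ℝ => ENNReal.ofReal l * C) (nhdsWithin 0 (Set.Ioi 0))
      (nhds 0) := by
    have hid : Filter.Tendsto (fun l : ℝ => l) (nhdsWithin 0 (Set.Ioi 0)) (nhds 0) :=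
      tendsto_nhdsWithin_of_tendsto_nhds Filter.tendsto_id
    simpa using ENNReal.Tendsto.mul_const (ENNReal.tendsto_ofReal hid) (Or.inr hC)
  refine nonpos_iff_eq_zero.1 (ge_of_tendsto hlim ?_)
  filter_upwards [Ioo_mem_nhdsGT (zero_lt_one' ℝ)] with l hl using h l hl.1 hl.2.le

theorem exists_ofReal_exp_le {ε : ℝ} (hε : 0 < ε) {p : ℝ≥0∞} (hp : p ≠ 0) :
    ∃ c : ℝ, 0 ≤ c ∧ ENNReal.ofReal (Real.exp (-c * ε)) ≤ p := by
  have hlim : Filter.Tendsto (fun c : ℝ => ENNReal.ofReal (Real.exp (-c * ε))) Filter.atTop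
      (nhds 0) := by
    simpa [neg_mul] using ENNReal.tendsto_ofReal
      (Real.tendsto_exp_neg_atTop_nhds_zero.comp (Filter.tendsto_id.atTop_mul_const hε))
  obtain ⟨c, hc, hcp⟩ :=
    ((Filter.eventually_ge_atTop 0).and
      (hlim.eventually (gt_mem_nhds (pos_iff_ne_zero.2 hp)))).exists
  exact ⟨c, hc, hcp.le⟩

theorem ofReal_exp_le_tsum_ite {c ε x : ℝ} (hc : 0 ≤ c) (hε : 0 < ε) (hx : 0 ≤ x) :
    ENNReal.ofReal (Real.exp (-c * x)) ≤ ∑' k : ℕ, if x ≤ k * ε then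
      ENNReal.ofReal (Real.exp (c * ε)) * ENNReal.ofReal (Real.exp (-c * ε)) ^ k else 0 := by
  set k := ⌈x / ε⌉₊
  have hk : x ≤ k * ε := (div_le_iff₀ hε).1 (Nat.le_ceil _)
  have hk' : (k : ℝ) * ε < x + ε :=
    calc (k : ℝ) * ε < (x / ε + 1) * ε :=
          mul_lt_mul_of_pos_right (Nat.ceil_lt_add_one (div_nonneg hx hε.le)) hε
      _ = x + ε := by field_simp
  refine le_trans ?_ (ENNReal.le_tsum k)
  rw [if_pos hk, ← ENNReal.ofReal_pow (Real.exp_pos _).le,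
    ← ENNReal.ofReal_mul (Real.exp_pos _).le, ← Real.exp_nat_mul, ← Real.exp_add]
  exact ENNReal.ofReal_le_ofReal (Real.exp_le_exp.2 (by nlinarith))

theorem exp_mul_sub_one_le {l : ℝ} (h0 : 0 ≤ l) (h1 : l ≤ 1) (s : ℝ) :
    Real.exp (l * s) - 1 ≤ l * (Real.exp s - 1) := by
  have := convexOn_exp.2 (Set.mem_univ s) (Set.mem_univ 0) h0 (sub_nonneg.2 h1) (by ring)
  simp only [smul_eq_mul, mul_zero, add_zero, Real.exp_zero, mul_one] at this
  linarith

section RealSeries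

variable {ι : Type*} {ν s : ι → ℝ}

theorem summable_mul_of_summable_mul_exp (hν0 : ∀ i, 0 ≤ ν i)
    (h₁ : Summable fun i => ν i * Real.exp (s i)) (h₂ : Summable fun i => ν i * Real.exp (-s i)) :
    Summable fun i => ν i * s i := by
  refine Summable.of_norm_bounded (h₁.add h₂) fun i => ?_
  rw [Real.norm_eq_abs, abs_mul, abs_of_nonneg (hν0 i), ← mul_add]
  refine mul_le_mul_of_nonneg_left ?_ (hν0 i)
  cases abs_cases (s i) <;>
    nlinarith [Real.add_one_le_exp (s i), Real.add_one_le_exp (-s i), Real.exp_pos (s i),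
      Real.exp_pos (-s i)]

theorem one_le_tsum_mul_exp (hν0 : ∀ i, 0 ≤ ν i) (hν : HasSum ν 1)
    (hs : HasSum (fun i => ν i * s i) 0) (hexp : Summable fun i => ν i * Real.exp (s i)) :
    1 ≤ ∑' i, ν i * Real.exp (s i) := by
  refine hasSum_le (fun i => ?_) (by simpa using hν.add hs) hexp.hasSum
  nlinarith [hν0 i, Real.add_one_le_exp (s i)]

theorem exists_pos_and_neg_of_hasSum_mul_eq_zero (hν0 : ∀ i, 0 ≤ ν i)
    (hs : HasSum (fun i => ν i * s i) 0) (hne : ∃ i, 0 < ν i ∧ s i ≠ 0) :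
    ∃ i, 0 < ν i ∧ s i < 0 := by
  by_contra! hnn
  have hterm (i : ι) : 0 ≤ ν i * s i := by
    rcases (hν0 i).eq_or_lt with h | h
    · simp [← h]
    · exact mul_nonneg h.le (hnn i h)
  obtain ⟨i, hi, hsi⟩ := hne
  have := congrFun ((hasSum_zero_iff_of_nonneg hterm).1 hs) i
  simp only [Pi.zero_apply, mul_eq_zero] at this
  exact this.elim hi.ne' hsi

end RealSeries

def survivalProb (κ : Z2 → Z2 → ℝ≥0∞) (A : Set Z2) (n : ℕ) (z : Z2) : ℝ≥0∞ :=
  ∑' w, aliveP κ A n z w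

section Killed

variable (κ : Z2 → Z2 → ℝ≥0∞) (A : Set Z2)

theorem aliveP_eq_zero_of_notMem {w : Z2} (hw : w ∉ A) (n : ℕ) (z : Z2) :
    aliveP κ A n z w = 0 := by
  induction n generalizing z with
  | zero => simp only [aliveP, ite_eq_right_iff, and_imp]; rintro rfl hz; exact absurd hz hw
  | succ n ih => simp [aliveP, ih]

theorem aliveP_eq_zero_of_start_notMem {z : Z2} (hz : z ∉ A) (n : ℕ) (w : Z2) :
    aliveP κ A n z w = 0 := by
  cases n <;> simp [aliveP, hz]

theorem mem_of_aliveP_ne_zero {n : ℕ} {z w : Z2} (h : aliveP κ A n z w ≠ 0) : w ∈ A :=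
  not_not.1 fun hw => h (aliveP_eq_zero_of_notMem κ A hw n z)

theorem aliveP_zero_of_mem {z : Z2} (hz : z ∈ A) (w : Z2) :
    aliveP κ A 0 z w = if w = z then 1 else 0 := by
  simp [aliveP, hz]

theorem aliveP_add (n k : ℕ) (z w : Z2) :
    aliveP κ A (n + k) z w = ∑' v, aliveP κ A n z v * aliveP κ A k v w := by
  induction n generalizing z with
  | zero =>
    by_cases hz : z ∈ A
    · simp [aliveP_zero_of_mem κ A hz]
    · simp [aliveP_eq_zero_of_start_notMem κ A hz]
  | succ n ih =>
    by_cases hz : z ∈ A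
    · simp only [Nat.add_right_comm n 1 k, aliveP, if_pos hz, ih, ← ENNReal.tsum_mul_left,
        ← ENNReal.tsum_mul_right, mul_assoc]
      exact ENNReal.tsum_comm
    · simp [aliveP_eq_zero_of_start_notMem κ A hz]

theorem aliveP_one (v w : Z2) :
    aliveP κ A 1 v w = if v ∈ A then κ v w * A.indicator 1 w else 0 := by
  by_cases hw : w ∈ A <;> simp [aliveP, hw, ite_and]

theorem aliveP_mono {B : Set Z2} (hAB : A ⊆ B) (n : ℕ) (z w : Z2) :
    aliveP κ A n z w ≤ aliveP κ B n z w := by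
  induction n generalizing z with
  | zero =>
    by_cases h : w = z ∧ z ∈ A
    · simp [aliveP, h, hAB h.2]
    · simp [aliveP, h]
  | succ n ih =>
    by_cases hz : z ∈ A
    · simp only [aliveP, if_pos hz, if_pos (hAB hz)]
      exact ENNReal.tsum_le_tsum fun v => mul_le_mul_right (ih v) _
    · simp [aliveP, hz]

theorem survivalProb_mono {B : Set Z2} (hAB : A ⊆ B) (n : ℕ) (z : Z2) :
    survivalProb κ A n z ≤ survivalProb κ B n z :=
  ENNReal.tsum_le_tsum fun w => aliveP_mono κ A hAB n z w

theorem survivalProb_succ_of_mem {z : Z2} (hz : z ∈ A) (n : ℕ) :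
    survivalProb κ A (n + 1) z = ∑' v, κ z v * survivalProb κ A n v := by
  simp only [survivalProb, aliveP, if_pos hz, ← ENNReal.tsum_mul_left]
  exact ENNReal.tsum_comm

theorem survivalProb_add (n k : ℕ) (z : Z2) :
    survivalProb κ A (n + k) z = ∑' v, aliveP κ A n z v * survivalProb κ A k v := by
  simp only [survivalProb, aliveP_add, ← ENNReal.tsum_mul_left]
  exact ENNReal.tsum_comm

theorem tsum_aliveP_succ_mul (n : ℕ) (z : Z2) (G : Z2 → ℝ≥0∞) :
    ∑' w, aliveP κ A (n + 1) z w * G w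
      = ∑' v, aliveP κ A n z v * ∑' w, κ v w * A.indicator G w := by
  simp only [aliveP_add κ A n 1, ← ENNReal.tsum_mul_right, ← ENNReal.tsum_mul_left]
  rw [ENNReal.tsum_comm]
  refine tsum_congr fun v => tsum_congr fun w => ?_
  by_cases hv : v ∈ A
  · by_cases hw : w ∈ A <;> simp [aliveP_one, hv, hw, mul_assoc]
  · simp [aliveP_eq_zero_of_notMem κ A hv]

variable {κ}

theorem survivalProb_le_one (hκ : ∀ z, ∑' w, κ z w ≤ 1) (n : ℕ) (z : Z2) :
    survivalProb κ A n z ≤ 1 := by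
  induction n generalizing z with
  | zero => by_cases hz : z ∈ A <;> simp [survivalProb, aliveP, hz]
  | succ n ih =>
    by_cases hz : z ∈ A
    · rw [survivalProb_succ_of_mem κ A hz]
      calc ∑' v, κ z v * survivalProb κ A n v ≤ ∑' v, κ z v * 1 :=
            ENNReal.tsum_le_tsum fun v => mul_le_mul_right (ih v) _
        _ ≤ 1 := by simpa using hκ z
    · simp [survivalProb, aliveP_eq_zero_of_start_notMem κ A hz]

theorem tsum_exitP_succ_of_mem {z : Z2} (hz : z ∈ A) (m : ℕ) :
    ∑' w, exitP κ A (m + 1) z w = ∑' v, κ z v * ∑' w, exitP κ A m v w := by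
  simp only [exitP, if_pos hz, ← ENNReal.tsum_mul_left]
  exact ENNReal.tsum_comm

theorem sum_exitP_add_survivalProb (hκ : ∀ z, ∑' w, κ z w = 1) (n : ℕ) (z : Z2) :
    ∑ m ∈ Finset.range (n + 1), ∑' w, exitP κ A m z w + survivalProb κ A n z = 1 := by
  induction n generalizing z with
  | zero => by_cases hz : z ∈ A <;> simp [survivalProb, exitP, aliveP, hz]
  | succ n ih =>
    by_cases hz : z ∈ A
    · rw [Finset.sum_range_succ', survivalProb_succ_of_mem κ A hz]
      have hexit0 : ∑' w, exitP κ A 0 z w = 0 := by simp [exitP, hz]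
      simp only [tsum_exitP_succ_of_mem A hz, hexit0, add_zero]
      rw [← Summable.tsum_finsetSum fun _ _ => ENNReal.summable, ← ENNReal.tsum_add]
      simp only [← Finset.mul_sum, ← mul_add, ih, mul_one, hκ]
    · simp [survivalProb, aliveP_eq_zero_of_start_notMem κ A hz, Finset.sum_range_succ', exitP, hz]

theorem exitTotal_eq_one (hκ : ∀ z, ∑' w, κ z w = 1) {z : Z2}
    (hsurv : ⨅ n, survivalProb κ A n z = 0) : exitTotal κ A z = 1 := by
  have hsum (n : ℕ) : ∑ m ∈ Finset.range (n + 1), ∑' w, exitP κ A m z w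
      = 1 - survivalProb κ A n z :=
    ENNReal.eq_sub_of_add_eq
      ((survivalProb_le_one A (fun v => (hκ v).le) n z).trans_lt ENNReal.one_lt_top).ne
      (sum_exitP_add_survivalProb A hκ n z)
  apply le_antisymm
  · rw [exitTotal, ENNReal.tsum_eq_iSup_nat]
    refine iSup_le fun N => ?_
    cases N with
    | zero => simp
    | succ n => exact (hsum n).trans_le tsub_le_self
  · calc (1 : ℝ≥0∞) = ⨆ n, (1 - survivalProb κ A n z) := by
          rw [← ENNReal.sub_iInf, hsurv, tsub_zero]
      _ = ⨆ n, ∑ m ∈ Finset.range (n + 1), ∑' w, exitP κ A m z w := by simp only [hsum]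
      _ ≤ exitTotal κ A z := iSup_le fun n => ENNReal.sum_le_tsum _

end Killed

def stepKer (μ : Z2 → ℝ≥0∞) (z w : Z2) : ℝ≥0∞ := μ (w - z)

theorem tsum_stepKer_mul (μ : Z2 → ℝ≥0∞) (z : Z2) (F : Z2 → ℝ≥0∞) :
    ∑' w, stepKer μ z w * F w = ∑' ξ, μ ξ * F (z + ξ) :=
  ((Equiv.addLeft z).tsum_eq _).symm.trans (by simp [stepKer])

theorem tsum_stepKer {μ : Z2 → ℝ≥0∞} (hμ : ∑' ξ, μ ξ = 1) (z : Z2) :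
    ∑' w, stepKer μ z w = 1 := by
  simpa [hμ] using tsum_stepKer_mul μ z 1

section Lattice

variable {μ : Z2 → ℝ≥0∞} {t : Z2 →+ ℝ}

theorem eq_of_nstep_stepKer_ne_zero (h : ∀ ξ, μ ξ ≠ 0 → t ξ = 0) (n : ℕ) {z z' : Z2}
    (hn : nstep (stepKer μ) n z z' ≠ 0) : t z' = t z := by
  induction n generalizing z with
  | zero =>
    simp only [nstep, ne_eq, ite_eq_right_iff, one_ne_zero, imp_false, not_not] at hn
    rw [hn]
  | succ n ih =>
    obtain ⟨w, hw⟩ : ∃ w, stepKer μ z w * nstep (stepKer μ) n w z' ≠ 0 := by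
      by_contra! h0
      exact hn (ENNReal.tsum_eq_zero.2 h0)
    obtain ⟨hzw, hwz'⟩ := mul_ne_zero_iff.1 hw
    have := h _ hzw
    rw [map_sub, sub_eq_zero] at this
    rw [ih hwz', this]

theorem exists_ne_zero_of_irreducible (hirr : ∀ z z', ∃ n, 0 < nstep (stepKer μ) n z z')
    (ht : t ≠ 0) : ∃ ξ, μ ξ ≠ 0 ∧ t ξ ≠ 0 := by
  by_contra! h
  obtain ⟨z, hz⟩ : ∃ z, t z ≠ 0 := by
    by_contra! h0
    exact ht (AddMonoidHom.ext h0)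
  obtain ⟨n, hn⟩ := hirr 0 z
  exact hz ((eq_of_nstep_stepKer_ne_zero h n hn.ne').trans (map_zero t))

end Lattice

def halfPlane (t : Z2 →+ ℝ) : Set Z2 := {w | 0 < t w}

def survivalProbBelow (κ : Z2 → Z2 → ℝ≥0∞) (A : Set Z2) (t : Z2 →+ ℝ) (h : ℝ) (n : ℕ) (z : Z2) :
    ℝ≥0∞ :=
  ∑' w, if t w ≤ h then aliveP κ A n z w else 0

def expMoment (μ : Z2 → ℝ≥0∞) (t : Z2 →+ ℝ) (l : ℝ) : ℝ≥0∞ :=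
  ∑' ξ, μ ξ * ENNReal.ofReal (Real.exp (-l * t ξ))

/-- Bounds the excess over `1` of `exp (-l t)` after a jump from `v` below the boundary. -/
def overshoot (μ : Z2 → ℝ≥0∞) (t : Z2 →+ ℝ) (l : ℝ) (v : Z2) : ℝ≥0∞ :=
  ∑' ξ, μ ξ * if t (v + ξ) ≤ 0 then ENNReal.ofReal (Real.exp (-l * t ξ) - 1) else 0

section HalfPlane

variable {μ : Z2 → ℝ≥0∞} {t : Z2 →+ ℝ} {ξ₀ : Z2}

theorem survivalProb_halfPlane_le_one (hμ : ∑' ξ, μ ξ = 1) (n : ℕ) (z : Z2) :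
    survivalProb (stepKer μ) (halfPlane t) n z ≤ 1 :=
  survivalProb_le_one _ (fun v => (tsum_stepKer hμ v).le) n z

/-- `k` consecutive jumps by `ξ₀` lead out of the half-plane. -/
theorem survivalProb_add_pow_le_one (hμ : ∑' ξ, μ ξ = 1) (k : ℕ) {v : Z2}
    (hv : t v ≤ k * -t ξ₀) : survivalProb (stepKer μ) (halfPlane t) k v + μ ξ₀ ^ k ≤ 1 := by
  induction k generalizing v with
  | zero =>
    have hvH : v ∉ halfPlane t := by simpa [halfPlane] using hv
    simp [survivalProb, aliveP_eq_zero_of_start_notMem _ _ hvH]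
  | succ k ih =>
    by_cases hvH : v ∈ halfPlane t
    · have hstep (ξ : Z2) : survivalProb (stepKer μ) (halfPlane t) k (v + ξ)
          + (if ξ = ξ₀ then μ ξ₀ ^ k else 0) ≤ 1 := by
        split_ifs with hξ
        · exact ih (by rw [hξ, map_add]; push_cast at hv; linarith)
        · simpa using survivalProb_halfPlane_le_one hμ k (v + ξ)
      calc survivalProb (stepKer μ) (halfPlane t) (k + 1) v + μ ξ₀ ^ (k + 1)
          = ∑' ξ, μ ξ * (survivalProb (stepKer μ) (halfPlane t) k (v + ξ)
              + if ξ = ξ₀ then μ ξ₀ ^ k else 0) := by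
            simp only [survivalProb_succ_of_mem _ _ hvH, tsum_stepKer_mul, mul_add,
              ENNReal.tsum_add, mul_ite, mul_zero, tsum_ite_eq, pow_succ']
        _ ≤ ∑' ξ, μ ξ * 1 := ENNReal.tsum_le_tsum fun ξ => mul_le_mul_right (hstep ξ) _
        _ = 1 := by simp [hμ]
    · have hp : μ ξ₀ ≤ 1 := hμ ▸ ENNReal.le_tsum ξ₀
      simpa [survivalProb, aliveP_eq_zero_of_start_notMem _ _ hvH] using pow_le_one₀ zero_le hp

theorem survivalProb_add_pow_mul_survivalProbBelow_le (hμ : ∑' ξ, μ ξ = 1) (n k : ℕ) (z : Z2) :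
    survivalProb (stepKer μ) (halfPlane t) (n + k) z
        + μ ξ₀ ^ k * survivalProbBelow (stepKer μ) (halfPlane t) t (k * -t ξ₀) n z
      ≤ survivalProb (stepKer μ) (halfPlane t) n z := by
  rw [survivalProb_add, survivalProbBelow, ← ENNReal.tsum_mul_left, ← ENNReal.tsum_add]
  refine ENNReal.tsum_le_tsum fun v => ?_
  split_ifs with hv
  · calc aliveP (stepKer μ) (halfPlane t) n z v * survivalProb (stepKer μ) (halfPlane t) k v
          + μ ξ₀ ^ k * aliveP (stepKer μ) (halfPlane t) n z v
        = aliveP (stepKer μ) (halfPlane t) n z v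
            * (survivalProb (stepKer μ) (halfPlane t) k v + μ ξ₀ ^ k) := by ring
      _ ≤ aliveP (stepKer μ) (halfPlane t) n z v * 1 :=
          mul_le_mul_right (survivalProb_add_pow_le_one hμ k hv) _
      _ = _ := mul_one _
  · simpa using mul_le_of_le_one_right zero_le (survivalProb_halfPlane_le_one hμ k v)

theorem pow_mul_tsum_survivalProbBelow_le (hμ : ∑' ξ, μ ξ = 1) (k : ℕ) (z : Z2) :
    μ ξ₀ ^ k * ∑' n, survivalProbBelow (stepKer μ) (halfPlane t) t (k * -t ξ₀) n z ≤ k := by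
  rw [← ENNReal.tsum_mul_left]
  exact tsum_le_of_add_le_shift k (survivalProb_halfPlane_le_one hμ · z)
    (survivalProb_add_pow_mul_survivalProbBelow_le hμ · k z)

theorem pow_mul_tsum_survivalProbBelow_le_inv_two_pow (hμ : ∑' ξ, μ ξ = 1) {r : ℝ≥0∞}
    (hr : r ≤ μ ξ₀ * 2⁻¹ * 2⁻¹) (k : ℕ) (z : Z2) :
    r ^ k * ∑' n, survivalProbBelow (stepKer μ) (halfPlane t) t (k * -t ξ₀) n z ≤ 2⁻¹ ^ k :=
  calc _ ≤ (μ ξ₀ * 2⁻¹ * 2⁻¹) ^ k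
          * ∑' n, survivalProbBelow (stepKer μ) (halfPlane t) t (k * -t ξ₀) n z := by gcongr
    _ = 2⁻¹ ^ k * (2⁻¹ ^ k
          * (μ ξ₀ ^ k * ∑' n, survivalProbBelow (stepKer μ) (halfPlane t) t (k * -t ξ₀) n z)) := by
        ring
    _ ≤ 2⁻¹ ^ k * (2⁻¹ ^ k * 2 ^ k) := by
        gcongr
        exact (pow_mul_tsum_survivalProbBelow_le hμ k z).trans
          (by exact_mod_cast Nat.lt_two_pow_self.le)
    _ = 2⁻¹ ^ k := by rw [← ENNReal.inv_pow, ENNReal.inv_mul_cancel (by simp) (by simp), mul_one]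

/-- The expected time spent below height `k ε` (where `ε = -t ξ₀`) is at most `k / μ ξ₀ ^ k`, so
the weight `exp (-c t)` with `exp (-c ε) ≤ μ ξ₀ / 4` makes the total expected time finite. -/
theorem exists_tsum_aliveLExpAt_ne_top (hμ : ∑' ξ, μ ξ = 1) (hξ₀ : μ ξ₀ ≠ 0) (ht₀ : t ξ₀ < 0)
    (z : Z2) : ∃ c : ℝ, 0 ≤ c ∧
      ∑' n, aliveLExpAt (stepKer μ) (halfPlane t) z (fun v => Real.exp (-c * t v)) n ≠ ∞ := by
  have hε : 0 < -t ξ₀ := neg_pos.2 ht₀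
  obtain ⟨c, hc, hr⟩ := exists_ofReal_exp_le hε (p := μ ξ₀ * 2⁻¹ * 2⁻¹) (by simp [hξ₀])
  set r := ENNReal.ofReal (Real.exp (-c * -t ξ₀))
  set e := ENNReal.ofReal (Real.exp (c * -t ξ₀))
  refine ⟨c, hc, ne_top_of_le_ne_top (b := e * ∑' k : ℕ, 2⁻¹ ^ k)
    (ENNReal.mul_ne_top ENNReal.ofReal_ne_top (by simp [ENNReal.tsum_geometric])) ?_⟩
  calc ∑' n, aliveLExpAt (stepKer μ) (halfPlane t) z (fun v => Real.exp (-c * t v)) n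
      ≤ ∑' n, ∑' v, aliveP (stepKer μ) (halfPlane t) n z v
          * ∑' k : ℕ, if t v ≤ k * -t ξ₀ then e * r ^ k else 0 := by
        refine ENNReal.tsum_le_tsum fun n => ENNReal.tsum_le_tsum fun v => ?_
        by_cases hv : aliveP (stepKer μ) (halfPlane t) n z v = 0
        · simp [hv]
        · exact mul_le_mul_right (ofReal_exp_le_tsum_ite hc hε
            (mem_of_aliveP_ne_zero _ _ hv).le) _
    _ = ∑' k : ℕ, e * (r ^ k
          * ∑' n, survivalProbBelow (stepKer μ) (halfPlane t) t (k * -t ξ₀) n z) := by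
        simp only [survivalProbBelow, ← ENNReal.tsum_mul_left, mul_ite, mul_zero]
        conv_lhs => enter [1, n]; rw [ENNReal.tsum_comm]
        rw [ENNReal.tsum_comm]
        exact tsum_congr fun k => tsum_congr fun n => tsum_congr fun v => by split_ifs <;> ring
    _ ≤ e * ∑' k : ℕ, 2⁻¹ ^ k := by
        rw [ENNReal.tsum_mul_left]
        gcongr with k
        exact pow_mul_tsum_survivalProbBelow_le_inv_two_pow hμ hr k z

/-- `exp (-l t)` is a submartingale of the killed walk, up to the exit probability and the
overshoot. -/
theorem ofReal_exp_add_tsum_indicator_le (hμ : ∑' ξ, μ ξ = 1) {l : ℝ} (hl : 0 ≤ l)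
    (hdrift : 1 ≤ expMoment μ t l) {v : Z2} (hv : v ∈ halfPlane t) :
    ENNReal.ofReal (Real.exp (-l * t v)) + ∑' ξ, μ ξ * (halfPlane t).indicator 1 (v + ξ)
      ≤ ∑' ξ, μ ξ * (halfPlane t).indicator (fun w => ENNReal.ofReal (Real.exp (-l * t w))) (v + ξ)
        + 1 + overshoot μ t l v := by
  set E : Z2 → ℝ≥0∞ := fun w => ENNReal.ofReal (Real.exp (-l * t w))
  have hsubharm : E v ≤ ∑' ξ, μ ξ * E (v + ξ) :=
    calc E v ≤ E v * expMoment μ t l := le_mul_of_one_le_right zero_le hdrift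
      _ = ∑' ξ, μ ξ * E (v + ξ) := by
        simp only [E, expMoment, ← ENNReal.tsum_mul_left, map_add, mul_add, Real.exp_add,
          ENNReal.ofReal_mul (Real.exp_pos _).le]
        exact tsum_congr fun ξ => by ring
  have hstep (ξ : Z2) : E (v + ξ) + (halfPlane t).indicator 1 (v + ξ)
      ≤ (halfPlane t).indicator E (v + ξ) + 1
        + if t (v + ξ) ≤ 0 then ENNReal.ofReal (Real.exp (-l * t ξ) - 1) else 0 := by
    by_cases hw : v + ξ ∈ halfPlane t
    · simp [hw]
    · have hw' : t (v + ξ) ≤ 0 := not_lt.1 hw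
      have htv : 0 < t v := hv
      have htξ : t v + t ξ ≤ 0 := by rwa [map_add] at hw'
      have hvξ : Real.exp (-l * t (v + ξ)) ≤ Real.exp (-l * t ξ) := by
        rw [map_add]; exact Real.exp_le_exp.2 (by nlinarith)
      have hξ : 1 ≤ Real.exp (-l * t ξ) := Real.one_le_exp (by nlinarith)
      simp only [Set.indicator_of_notMem hw, hw', if_true, zero_add, add_zero]
      rw [← ENNReal.ofReal_one, ← ENNReal.ofReal_add zero_le_one (by linarith)]
      exact ENNReal.ofReal_le_ofReal (by linarith)
  calc E v + ∑' ξ, μ ξ * (halfPlane t).indicator 1 (v + ξ)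
      ≤ ∑' ξ, μ ξ * (E (v + ξ) + (halfPlane t).indicator 1 (v + ξ)) := by
        simp only [mul_add, ENNReal.tsum_add]; gcongr
    _ ≤ ∑' ξ, μ ξ * ((halfPlane t).indicator E (v + ξ) + 1
          + if t (v + ξ) ≤ 0 then ENNReal.ofReal (Real.exp (-l * t ξ) - 1) else 0) := by
        exact ENNReal.tsum_le_tsum fun ξ => mul_le_mul_right (hstep ξ) _
    _ = _ := by simp only [mul_add, ENNReal.tsum_add, mul_one, hμ, overshoot]

theorem aliveLExpAt_add_survivalProb_succ_le (hμ : ∑' ξ, μ ξ = 1) {l : ℝ} (hl : 0 ≤ l)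
    (hdrift : 1 ≤ expMoment μ t l) (z : Z2) (n : ℕ) :
    aliveLExpAt (stepKer μ) (halfPlane t) z (fun w => Real.exp (-l * t w)) n
        + survivalProb (stepKer μ) (halfPlane t) (n + 1) z
      ≤ aliveLExpAt (stepKer μ) (halfPlane t) z (fun w => Real.exp (-l * t w)) (n + 1)
        + survivalProb (stepKer μ) (halfPlane t) n z
        + ∑' v, aliveP (stepKer μ) (halfPlane t) n z v * overshoot μ t l v := by
  have hsurv := tsum_aliveP_succ_mul (stepKer μ) (halfPlane t) n z 1
  simp only [Pi.one_apply, mul_one] at hsurv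
  rw [aliveLExpAt, aliveLExpAt, tsum_aliveP_succ_mul, survivalProb, survivalProb, hsurv]
  simp only [tsum_stepKer_mul, ← ENNReal.tsum_add]
  refine ENNReal.tsum_le_tsum fun v => ?_
  by_cases hv : aliveP (stepKer μ) (halfPlane t) n z v = 0
  · simp [hv]
  · have := ofReal_exp_add_tsum_indicator_le hμ hl hdrift (mem_of_aliveP_ne_zero _ _ hv)
    calc _ = aliveP (stepKer μ) (halfPlane t) n z v * (ENNReal.ofReal (Real.exp (-l * t v))
            + ∑' ξ, μ ξ * (halfPlane t).indicator 1 (v + ξ)) := by ring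
      _ ≤ _ := mul_le_mul_right this _
      _ = _ := by ring

theorem overshoot_le {c l : ℝ} (hc : 0 ≤ c) (hl0 : 0 ≤ l) (hl1 : l ≤ 1) (v : Z2) :
    overshoot μ t l v
      ≤ ENNReal.ofReal l * ENNReal.ofReal (Real.exp (-c * t v)) * expMoment μ t (c + 1) := by
  rw [overshoot, expMoment, ← ENNReal.tsum_mul_left]
  refine ENNReal.tsum_le_tsum fun ξ => ?_
  split_ifs with hξ
  · have htξ : t v + t ξ ≤ 0 := by rwa [map_add] at hξ
    have hreal : Real.exp (-l * t ξ) - 1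
        ≤ l * Real.exp (-c * t v) * Real.exp (-(c + 1) * t ξ) :=
      calc Real.exp (-l * t ξ) - 1 ≤ l * (Real.exp (-t ξ) - 1) := by
            simpa [mul_neg] using exp_mul_sub_one_le hl0 hl1 (-t ξ)
        _ ≤ l * Real.exp (-t ξ) := by nlinarith
        _ ≤ l * (Real.exp (-c * t v) * Real.exp (-(c + 1) * t ξ)) := by
            rw [← Real.exp_add]
            exact mul_le_mul_of_nonneg_left (Real.exp_le_exp.2 (by nlinarith)) hl0
        _ = _ := by ring
    calc μ ξ * ENNReal.ofReal (Real.exp (-l * t ξ) - 1)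
        ≤ μ ξ * ENNReal.ofReal (l * Real.exp (-c * t v) * Real.exp (-(c + 1) * t ξ)) := by
          gcongr
      _ = _ := by
          rw [ENNReal.ofReal_mul (by positivity), ENNReal.ofReal_mul hl0]; ring
  · simp

theorem tsum_tsum_aliveP_mul_overshoot_le {c l : ℝ} (hc : 0 ≤ c) (hl0 : 0 ≤ l) (hl1 : l ≤ 1)
    (z : Z2) :
    ∑' n, ∑' v, aliveP (stepKer μ) (halfPlane t) n z v * overshoot μ t l v
      ≤ ENNReal.ofReal l * (expMoment μ t (c + 1)
          * ∑' n, aliveLExpAt (stepKer μ) (halfPlane t) z (fun v => Real.exp (-c * t v)) n) := by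
  simp only [aliveLExpAt, ← ENNReal.tsum_mul_left]
  refine ENNReal.tsum_le_tsum fun n => ENNReal.tsum_le_tsum fun v => ?_
  calc aliveP (stepKer μ) (halfPlane t) n z v * overshoot μ t l v
      ≤ aliveP (stepKer μ) (halfPlane t) n z v * (ENNReal.ofReal l
          * ENNReal.ofReal (Real.exp (-c * t v)) * expMoment μ t (c + 1)) :=
        mul_le_mul_right (overshoot_le hc hl0 hl1 v) _
    _ = _ := by ring

theorem aliveLExpAt_le_survivalProb {l : ℝ} (hl : 0 ≤ l) (n : ℕ) (z : Z2) :
    aliveLExpAt (stepKer μ) (halfPlane t) z (fun w => Real.exp (-l * t w)) n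
      ≤ survivalProb (stepKer μ) (halfPlane t) n z := by
  refine ENNReal.tsum_le_tsum fun w => ?_
  by_cases hw : aliveP (stepKer μ) (halfPlane t) n z w = 0
  · simp [hw]
  · have htw : 0 < t w := mem_of_aliveP_ne_zero _ _ hw
    refine mul_le_of_le_one_right zero_le (ENNReal.ofReal_le_one.2 ?_)
    exact Real.exp_le_one_iff.2 (by nlinarith)

theorem aliveLExpAt_ne_top (hμ : ∑' ξ, μ ξ = 1) {l : ℝ} (hl : 0 ≤ l) (n : ℕ) (z : Z2) :
    aliveLExpAt (stepKer μ) (halfPlane t) z (fun w => Real.exp (-l * t w)) n ≠ ∞ :=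
  ne_top_of_le_ne_top (ne_top_of_le_ne_top ENNReal.one_ne_top
    (survivalProb_halfPlane_le_one hμ n z)) (aliveLExpAt_le_survivalProb hl n z)

theorem ofReal_exp_add_survivalProb_le (hμ : ∑' ξ, μ ξ = 1) {l : ℝ} (hl : 0 ≤ l)
    (hdrift : 1 ≤ expMoment μ t l) {z : Z2} (hz : z ∈ halfPlane t) (N : ℕ) :
    ENNReal.ofReal (Real.exp (-l * t z)) + survivalProb (stepKer μ) (halfPlane t) N z
      ≤ aliveLExpAt (stepKer μ) (halfPlane t) z (fun w => Real.exp (-l * t w)) N + 1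
        + ∑' n, ∑' v, aliveP (stepKer μ) (halfPlane t) n z v * overshoot μ t l v := by
  have hW0 : aliveLExpAt (stepKer μ) (halfPlane t) z (fun w => Real.exp (-l * t w)) 0
      = ENNReal.ofReal (Real.exp (-l * t z)) := by
    simp [aliveLExpAt, aliveP_zero_of_mem _ _ hz]
  have htele := add_le_add_add_sum_of_succ (aliveLExpAt_ne_top hμ hl · z)
    (aliveLExpAt_add_survivalProb_succ_le hμ hl hdrift z) N
  rw [hW0] at htele
  refine htele.trans ?_
  gcongr
  · exact survivalProb_halfPlane_le_one hμ 0 z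
  · exact ENNReal.sum_le_tsum _

theorem mul_survivalProb_add_aliveLExpAt_le {l h : ℝ} (hl : 0 ≤ l) (hh : 0 ≤ h) (n : ℕ)
    (z : Z2) :
    ENNReal.ofReal (1 - Real.exp (-l * h)) * survivalProb (stepKer μ) (halfPlane t) n z
        + aliveLExpAt (stepKer μ) (halfPlane t) z (fun w => Real.exp (-l * t w)) n
      ≤ survivalProb (stepKer μ) (halfPlane t) n z
        + survivalProbBelow (stepKer μ) (halfPlane t) t h n z := by
  rw [survivalProb, aliveLExpAt, survivalProbBelow, ← ENNReal.tsum_mul_left, ← ENNReal.tsum_add,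
    ← ENNReal.tsum_add]
  refine ENNReal.tsum_le_tsum fun w => ?_
  by_cases hw : aliveP (stepKer μ) (halfPlane t) n z w = 0
  · simp [hw]
  have htw : 0 < t w := mem_of_aliveP_ne_zero _ _ hw
  have hδ : 0 ≤ 1 - Real.exp (-l * h) := sub_nonneg.2 (Real.exp_le_one_iff.2 (by nlinarith))
  have hE : Real.exp (-l * t w) ≤ 1 := Real.exp_le_one_iff.2 (by nlinarith)
  set a := aliveP (stepKer μ) (halfPlane t) n z w
  split_ifs with hwh
  · calc ENNReal.ofReal (1 - Real.exp (-l * h)) * a + a * ENNReal.ofReal (Real.exp (-l * t w))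
        ≤ 1 * a + a * 1 := by
          gcongr
          · exact ENNReal.ofReal_le_one.2 (by linarith [Real.exp_pos (-l * h)])
          · exact ENNReal.ofReal_le_one.2 hE
      _ = a + a := by ring
  · have hfar : Real.exp (-l * t w) ≤ Real.exp (-l * h) :=
      Real.exp_le_exp.2 (by nlinarith [not_le.1 hwh])
    calc ENNReal.ofReal (1 - Real.exp (-l * h)) * a + a * ENNReal.ofReal (Real.exp (-l * t w))
        = ENNReal.ofReal (1 - Real.exp (-l * h) + Real.exp (-l * t w)) * a := by
          rw [ENNReal.ofReal_add hδ (Real.exp_pos _).le]; ring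
      _ ≤ 1 * a := by gcongr; exact ENNReal.ofReal_le_one.2 (by linarith)
      _ = a + 0 := by ring

theorem ofReal_exp_add_mul_iInf_survivalProb_le (hμ : ∑' ξ, μ ξ = 1) (hξ₀ : μ ξ₀ ≠ 0)
    {l : ℝ} (hl : 0 ≤ l) (hdrift : 1 ≤ expMoment μ t l) {z : Z2} (hz : z ∈ halfPlane t)
    {k : ℕ} (hk : 0 ≤ k * -t ξ₀) :
    ENNReal.ofReal (Real.exp (-l * t z)) + ENNReal.ofReal (1 - Real.exp (-l * (k * -t ξ₀)))
        * ⨅ n, survivalProb (stepKer μ) (halfPlane t) n z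
      ≤ 1 + ∑' n, ∑' v, aliveP (stepKer μ) (halfPlane t) n z v * overshoot μ t l v := by
  set near := fun N => survivalProbBelow (stepKer μ) (halfPlane t) t (k * -t ξ₀) N z
  have hnear : Filter.Tendsto near Filter.atTop (nhds 0) := by
    refine ENNReal.tendsto_atTop_zero_of_tsum_ne_top fun htop => ?_
    have := pow_mul_tsum_survivalProbBelow_le (t := t) (ξ₀ := ξ₀) hμ k z
    rw [htop, ENNReal.mul_top (pow_ne_zero _ hξ₀), top_le_iff] at this
    exact ENNReal.natCast_ne_top k this
  -- Survivors above height `k ε` have `1 - exp (-l t) ≥ 1 - exp (-l k ε)`, and the mass below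
  -- that height tends to `0` since the expected time spent there is finite.
  refine ge_of_tendsto' (by simpa using tendsto_const_nhds.add hnear) fun N => ?_
  set W := aliveLExpAt (stepKer μ) (halfPlane t) z (fun w => Real.exp (-l * t w)) N
  refine ENNReal.le_of_add_le_add_right (aliveLExpAt_ne_top (t := t) hμ hl N z) ?_
  calc _ ≤ ENNReal.ofReal (Real.exp (-l * t z)) + (ENNReal.ofReal (1 - Real.exp (-l * (k * -t ξ₀)))
          * survivalProb (stepKer μ) (halfPlane t) N z + W) := by
        rw [add_assoc]; gcongr; exact iInf_le _ N
    _ ≤ ENNReal.ofReal (Real.exp (-l * t z)) + (survivalProb (stepKer μ) (halfPlane t) N z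
          + near N) := add_le_add le_rfl (mul_survivalProb_add_aliveLExpAt_le hl hk N z)
    _ ≤ _ := by
        have := ofReal_exp_add_survivalProb_le hμ hl hdrift hz N
        calc _ = ENNReal.ofReal (Real.exp (-l * t z)) + survivalProb (stepKer μ) (halfPlane t) N z
              + near N := by ring
          _ ≤ W + 1 + ∑' n, ∑' v, aliveP (stepKer μ) (halfPlane t) n z v * overshoot μ t l v
              + near N := by gcongr
          _ = _ := by ring

theorem one_sub_exp_neg_one_mul_iInf_survivalProb_le (hμ : ∑' ξ, μ ξ = 1) (hξ₀ : μ ξ₀ ≠ 0)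
    (ht₀ : t ξ₀ < 0) {l : ℝ} (hl0 : 0 < l) (hl1 : l ≤ 1) (hdrift : 1 ≤ expMoment μ t l) {z : Z2}
    (hz : z ∈ halfPlane t) {c : ℝ} (hc : 0 ≤ c) :
    ENNReal.ofReal (1 - Real.exp (-1)) * ⨅ n, survivalProb (stepKer μ) (halfPlane t) n z
      ≤ ENNReal.ofReal l * (ENNReal.ofReal (t z) + expMoment μ t (c + 1)
          * ∑' n, aliveLExpAt (stepKer μ) (halfPlane t) z (fun v => Real.exp (-c * t v)) n) := by
  have hε : 0 < -t ξ₀ := neg_pos.2 ht₀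
  set k := ⌈1 / (l * -t ξ₀)⌉₊
  have hk : 1 ≤ l * (k * -t ξ₀) := by
    have := (div_le_iff₀ (mul_pos hl0 hε)).1 (Nat.le_ceil (1 / (l * -t ξ₀)))
    nlinarith
  have hδ : ENNReal.ofReal (1 - Real.exp (-1))
      ≤ ENNReal.ofReal (1 - Real.exp (-l * (k * -t ξ₀))) :=
    ENNReal.ofReal_le_ofReal
      (by linarith [Real.exp_le_exp.2 (show -l * (k * -t ξ₀) ≤ -1 by linarith)])
  have hone : 1 ≤ ENNReal.ofReal (Real.exp (-l * t z))
      + ENNReal.ofReal l * ENNReal.ofReal (t z) := by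
    rw [← ENNReal.ofReal_mul hl0.le, ← ENNReal.ofReal_add (Real.exp_pos _).le
      (mul_pos hl0 hz).le, ← ENNReal.ofReal_one]
    exact ENNReal.ofReal_le_ofReal (by linarith [Real.add_one_le_exp (-l * t z)])
  refine ENNReal.le_of_add_le_add_left (a := ENNReal.ofReal (Real.exp (-l * t z)))
    ENNReal.ofReal_ne_top ?_
  calc _ ≤ ENNReal.ofReal (Real.exp (-l * t z)) + ENNReal.ofReal (1 - Real.exp (-l * (k * -t ξ₀)))
          * ⨅ n, survivalProb (stepKer μ) (halfPlane t) n z := by gcongr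
    _ ≤ 1 + ∑' n, ∑' v, aliveP (stepKer μ) (halfPlane t) n z v * overshoot μ t l v :=
        ofReal_exp_add_mul_iInf_survivalProb_le hμ hξ₀ hl0.le hdrift hz (by positivity)
    _ ≤ _ := add_le_add hone (tsum_tsum_aliveP_mul_overshoot_le hc hl0.le hl1 z)
    _ = _ := by ring

/-- `1 ≤ expMoment μ t l` for `l > 0` says that `t` has nonpositive drift under `μ`. -/
theorem iInf_survivalProb_halfPlane_eq_zero (hμ : ∑' ξ, μ ξ = 1)
    (hdrift : ∀ l, 0 < l → 1 ≤ expMoment μ t l) (hmom : ∀ l, 0 < l → expMoment μ t l ≠ ∞)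
    (hξ₀ : μ ξ₀ ≠ 0) (ht₀ : t ξ₀ < 0) (z : Z2) :
    ⨅ n, survivalProb (stepKer μ) (halfPlane t) n z = 0 := by
  by_cases hz : z ∈ halfPlane t
  swap
  · exact nonpos_iff_eq_zero.1 ((iInf_le _ 0).trans_eq
      (by simp [survivalProb, aliveP_eq_zero_of_start_notMem _ _ hz]))
  obtain ⟨c, hc, hG⟩ := exists_tsum_aliveLExpAt_ne_top hμ hξ₀ ht₀ z
  have hC : ENNReal.ofReal (t z) + expMoment μ t (c + 1)
      * ∑' n, aliveLExpAt (stepKer μ) (halfPlane t) z (fun v => Real.exp (-c * t v)) n ≠ ∞ :=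
    ENNReal.add_ne_top.2 ⟨ENNReal.ofReal_ne_top,
      ENNReal.mul_ne_top (hmom _ (by linarith)) hG⟩
  have hδ : ENNReal.ofReal (1 - Real.exp (-1)) ≠ 0 := by
    simp
  exact (mul_eq_zero.1 (eq_zero_of_forall_le_ofReal_mul hC fun l hl0 hl1 =>
    one_sub_exp_neg_one_mul_iInf_survivalProb_le hμ hξ₀ ht₀ hl0 hl1 (hdrift l hl0) hz hc))
    |>.resolve_left hδ

end HalfPlane

-- `twKer γ a` is definitionally `stepKer (twistedStep γ a)`.
def twistedStep (γ : Z2 → ℝ) (a : R2) (ξ : Z2) : ℝ≥0∞ :=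
  ENNReal.ofReal (γ ξ * Real.exp (dotR a (emb ξ)))

def projHom (f : R2) : Z2 →+ ℝ :=
  AddMonoidHom.mk' (fun z => dotR f (emb z)) fun z w => by simp [dotR, emb]; ring

theorem projHom_apply (f : R2) (z : Z2) : projHom f z = dotR f (emb z) := rfl

theorem projHom_ne_zero {f : R2} (hf : nrm f = 1) : projHom f ≠ 0 := by
  intro h0
  have h1 : f.1 = 0 := by simpa [projHom_apply, dotR, emb] using DFunLike.congr_fun h0 (1, 0)
  have h2 : f.2 = 0 := by simpa [projHom_apply, dotR, emb] using DFunLike.congr_fun h0 (0, 1)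
  simp [nrm, dotR, h1, h2] at hf

theorem dotR_add_smul_left (a f x : R2) (l : ℝ) : dotR (a + l • f) x = dotR a x + l * dotR f x := by
  simp only [dotR, Prod.fst_add, Prod.snd_add, Prod.smul_fst, Prod.smul_snd, smul_eq_mul]; ring

theorem dotR_smul_right (f x : R2) (r : ℝ) : dotR f (r • x) = r * dotR f x := by
  simp only [dotR, Prod.smul_fst, Prod.smul_snd, smul_eq_mul]; ring

theorem twistedStep_ne_zero_iff {γ : Z2 → ℝ} {a : R2} {ξ : Z2} :
    twistedStep γ a ξ ≠ 0 ↔ 0 < γ ξ := by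
  simp [twistedStep, mul_pos_iff_of_pos_right (Real.exp_pos _)]

theorem tsum_twistedStep {γ : Z2 → ℝ} (hγ0 : ∀ z, 0 ≤ γ z) {a : R2}
    (ha : Summable fun z : Z2 => γ z * Real.exp (dotR a (emb z))) :
    ∑' ξ, twistedStep γ a ξ = ENNReal.ofReal (jgf γ a) :=
  (ENNReal.ofReal_tsum_of_nonneg (fun ξ => mul_nonneg (hγ0 ξ) (Real.exp_pos _).le) ha).symm

theorem expMoment_twistedStep {γ : Z2 → ℝ} (hγ0 : ∀ z, 0 ≤ γ z)
    (hA3 : ∀ a : R2, Summable fun z : Z2 => γ z * Real.exp (dotR a (emb z))) (a f : R2) (l : ℝ) :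
    expMoment (twistedStep γ a) (projHom f) l = ENNReal.ofReal (jgf γ (a + (-l) • f)) := by
  rw [← tsum_twistedStep hγ0 (hA3 _), expMoment]
  refine tsum_congr fun ξ => ?_
  rw [twistedStep, twistedStep, ← ENNReal.ofReal_mul (mul_nonneg (hγ0 ξ) (Real.exp_pos _).le),
    projHom_apply, dotR_add_smul_left, Real.exp_add, mul_assoc]

theorem summable_mul_dotR {γ : Z2 → ℝ} (hγ0 : ∀ z, 0 ≤ γ z)
    (hA3 : ∀ a : R2, Summable fun z : Z2 => γ z * Real.exp (dotR a (emb z))) (a b : R2) :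
    Summable fun ξ => γ ξ * Real.exp (dotR a (emb ξ)) * dotR b (emb ξ) := by
  refine summable_mul_of_summable_mul_exp (fun ξ => mul_nonneg (hγ0 ξ) (Real.exp_pos _).le)
    ((hA3 (a + (1 : ℝ) • b)).congr fun ξ => ?_) ((hA3 (a + (-1 : ℝ) • b)).congr fun ξ => ?_) <;>
  rw [dotR_add_smul_left, Real.exp_add] <;> ring_nf

theorem hasSum_mul_dotR_gradJgf {γ : Z2 → ℝ} (hγ0 : ∀ z, 0 ≤ γ z)
    (hA3 : ∀ a : R2, Summable fun z : Z2 => γ z * Real.exp (dotR a (emb z))) (a f : R2) :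
    HasSum (fun ξ => γ ξ * Real.exp (dotR a (emb ξ)) * dotR f (emb ξ)) (dotR f (gradJgf γ a)) := by
  have h₁ := (summable_mul_dotR hγ0 hA3 a (1, 0)).hasSum.mul_left f.1
  have h₂ := (summable_mul_dotR hγ0 hA3 a (0, 1)).hasSum.mul_left f.2
  have hfun : (fun ξ => γ ξ * Real.exp (dotR a (emb ξ)) * dotR f (emb ξ))
      = fun ξ => f.1 * (γ ξ * Real.exp (dotR a (emb ξ)) * dotR (1, 0) (emb ξ))
        + f.2 * (γ ξ * Real.exp (dotR a (emb ξ)) * dotR (0, 1) (emb ξ)) := by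
    funext ξ; simp only [dotR]; ring
  have hval : dotR f (gradJgf γ a)
      = f.1 * ∑' ξ, γ ξ * Real.exp (dotR a (emb ξ)) * dotR (1, 0) (emb ξ)
        + f.2 * ∑' ξ, γ ξ * Real.exp (dotR a (emb ξ)) * dotR (0, 1) (emb ξ) := by
    simp only [dotR, gradJgf, emb, one_mul, zero_mul, add_zero, zero_add]
  rw [hfun, hval]
  exact h₁.add h₂

theorem dotR_gradJgf_eq_zero {γ : Z2 → ℝ} {a c f : R2} (haq : qmap γ a = c) (hfc : dotR f c = 0) :
    dotR f (gradJgf γ a) = 0 := by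
  by_cases hg : nrm (gradJgf γ a) = 0
  · rw [nrm, Real.sqrt_eq_zero', dotR] at hg
    have h1 : (gradJgf γ a).1 = 0 := by nlinarith
    have h2 : (gradJgf γ a).2 = 0 := by nlinarith
    simp [dotR, h1, h2]
  · rwa [← haq, qmap, dotR_smul_right, mul_eq_zero, or_iff_right (inv_ne_zero hg)] at hfc

theorem one_le_expMoment_twistedStep {γ : Z2 → ℝ} (hγ0 : ∀ z, 0 ≤ γ z)
    (hA3 : ∀ a : R2, Summable fun z : Z2 => γ z * Real.exp (dotR a (emb z))) {a f : R2}
    (haD : jgf γ a = 1)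
    (hcentered : HasSum (fun ξ => γ ξ * Real.exp (dotR a (emb ξ)) * dotR f (emb ξ)) 0) (l : ℝ) :
    1 ≤ expMoment (twistedStep γ a) (projHom f) l := by
  rw [expMoment_twistedStep hγ0 hA3, ← ENNReal.ofReal_one]
  refine ENNReal.ofReal_le_ofReal ?_
  have := one_le_tsum_mul_exp (s := fun ξ => -l * dotR f (emb ξ))
    (fun ξ => mul_nonneg (hγ0 ξ) (Real.exp_pos _).le) (by rw [← haD]; exact (hA3 a).hasSum)
    (by simpa [mul_left_comm, mul_assoc] using hcentered.mul_left (-l))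
    ((hA3 (a + (-l) • f)).congr fun ξ => by rw [dotR_add_smul_left, Real.exp_add, mul_assoc])
  simpa only [jgf, dotR_add_smul_left, Real.exp_add, mul_assoc] using this

theorem exists_twistedStep_ne_zero_and_neg {γ : Z2 → ℝ} (hγ0 : ∀ z, 0 ≤ γ z)
    (hA1 : ∀ z z' : Z2, ∃ n : ℕ, 0 < nstep (twKer γ 0) n z z') {a f : R2} (hf : nrm f = 1)
    (hcentered : HasSum (fun ξ => γ ξ * Real.exp (dotR a (emb ξ)) * dotR f (emb ξ)) 0) :
    ∃ ξ₀, twistedStep γ a ξ₀ ≠ 0 ∧ projHom f ξ₀ < 0 := by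
  obtain ⟨ξ, hξ, htξ⟩ :=
    exists_ne_zero_of_irreducible (μ := twistedStep γ 0) hA1 (projHom_ne_zero hf)
  obtain ⟨ξ₀, hν, ht⟩ := exists_pos_and_neg_of_hasSum_mul_eq_zero
    (fun ξ => mul_nonneg (hγ0 ξ) (Real.exp_pos _).le) hcentered
    ⟨ξ, mul_pos (twistedStep_ne_zero_iff.1 hξ) (Real.exp_pos _), htξ⟩
  exact ⟨ξ₀, twistedStep_ne_zero_iff.2 (pos_of_mul_pos_left hν (Real.exp_pos _).le), ht⟩

theorem exitP_mul_ofReal_exp {γ : Z2 → ℝ} (hγ0 : ∀ z, 0 ≤ γ z) (a : R2) (A : Set Z2) (n : ℕ)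
    (z₁ z₂ : Z2) :
    exitP (twKer γ 0) A n z₁ z₂ * ENNReal.ofReal (Real.exp (dotR a (emb (z₂ - z₁))))
      = exitP (twKer γ a) A n z₁ z₂ := by
  induction n generalizing z₁ with
  | zero =>
    simp only [exitP]
    split_ifs with h
    · simp [h.1, dotR, emb]
    · simp
  | succ n ih =>
    simp only [exitP]
    split_ifs
    · rw [← ENNReal.tsum_mul_right]
      refine tsum_congr fun w => ?_
      rw [← ih w, twKer, twKer, ← projHom_apply, ← projHom_apply,
        show z₂ - z₁ = (w - z₁) + (z₂ - w) by abel, map_add, Real.exp_add,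
        ENNReal.ofReal_mul (Real.exp_pos _).le]
      simp only [projHom_apply, dotR, Prod.fst_zero, Prod.snd_zero, zero_mul, add_zero,
        Real.exp_zero, mul_one]
      rw [ENNReal.ofReal_mul (hγ0 _)]
      ring
    · simp

theorem boundary_twisted_exit_prob_one_general
    (γ : Z2 → ℝ) (c f : Fin 2 → R2) (K : Set R2)
    -- `γ` is a probability distribution on `ℤ²`
    (hγ0 : ∀ z : Z2, 0 ≤ γ z)
    -- `c 0, c 1` are unit vectors, `f i` is the unit vector perpendicular to `c i`
    -- pointing into the cone; the angle between `c 0` and `c 1` lies in `(0, π)`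
    (hfUnit : ∀ i, nrm (f i) = 1)
    (hperp : ∀ i, dotR (f i) (c i) = 0)
    -- `K` is the open convex cone bounded by the rays through `c 0` and `c 1`
    (hK : K = {x : R2 | ∀ i, 0 < dotR (f i) x})
    -- (A1) the walk is irreducible with nonzero mean
    (hA1 : ∀ z z' : Z2, ∃ n : ℕ, 0 < nstep (twKer γ 0) n z z')
    -- (A3) the jump generating function is finite everywhere
    (hA3 : ∀ a : R2, Summable fun z : Z2 => γ z * Real.exp (dotR a (emb z)))
    (i : Fin 2)
    -- `a = a(cᵢ)`
    (a : R2) (haD : jgf γ a = 1) (haq : qmap γ a = c i)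
    (z : Z2) :
    exitTotal (twKer γ a) (emb ⁻¹' K) z = 1 ∧
    exitLExp (twKer γ 0) (emb ⁻¹' K) z
        (fun z' => Real.exp (dotR a (emb (z' - z)))) = 1 := by
  have hcentered : HasSum (fun ξ => γ ξ * Real.exp (dotR a (emb ξ)) * dotR (f i) (emb ξ)) 0 :=
    dotR_gradJgf_eq_zero haq (hperp i) ▸ hasSum_mul_dotR_gradJgf hγ0 hA3 a (f i)
  have hμ : ∑' ξ, twistedStep γ a ξ = 1 := by
    rw [tsum_twistedStep hγ0 (hA3 a), haD, ENNReal.ofReal_one]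
  obtain ⟨ξ₀, hξ₀, ht₀⟩ := exists_twistedStep_ne_zero_and_neg hγ0 hA1 (hfUnit i) hcentered
  have hhalf := iInf_survivalProb_halfPlane_eq_zero hμ
    (fun l _ => one_le_expMoment_twistedStep hγ0 hA3 haD hcentered l)
    (fun l _ => by simp [expMoment_twistedStep hγ0 hA3]) hξ₀ ht₀ z
  have hKH : emb ⁻¹' K ⊆ halfPlane (projHom (f i)) := fun w hw => by
    rw [Set.mem_preimage, hK] at hw
    exact hw i
  have hexit : exitTotal (twKer γ a) (emb ⁻¹' K) z = 1 :=
    exitTotal_eq_one _ (tsum_stepKer hμ) (nonpos_iff_eq_zero.1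
      (hhalf ▸ iInf_mono fun n => survivalProb_mono _ _ hKH n z))
  refine ⟨hexit, ?_⟩
  simpa only [exitLExp, exitP_mul_ofReal_exp hγ0, exitTotal] using hexit

/-- For `i = 1, 2` and `a = a(cᵢ)`: `ℙ_z(τ_a < ∞) = 1` for every `z ∈ K`;
equivalently `𝔼_z[e^{a·(S(τ)−z)}; τ < ∞] = 1`. -/
theorem boundary_twisted_exit_prob_one
    (γ : Z2 → ℝ) (c f : Fin 2 → R2) (K : Set R2)
    -- `γ` is a probability distribution on `ℤ²`
    (hγ0 : ∀ z : Z2, 0 ≤ γ z) (hγ1 : HasSum γ 1)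
    -- `c 0, c 1` are unit vectors, `f i` is the unit vector perpendicular to `c i`
    -- pointing into the cone; the angle between `c 0` and `c 1` lies in `(0, π)`
    (hcUnit : ∀ i, nrm (c i) = 1) (hfUnit : ∀ i, nrm (f i) = 1)
    (hperp : ∀ i, dotR (f i) (c i) = 0)
    (hinward : ∀ i j, i ≠ j → 0 < dotR (f i) (c j))
    -- `K` is the open convex cone bounded by the rays through `c 0` and `c 1`
    (hK : K = {x : R2 | ∀ i, 0 < dotR (f i) x})
    -- (A1) the walk is irreducible with nonzero mean
    (hA1 : ∀ z z' : Z2, ∃ n : ℕ, 0 < nstep (twKer γ 0) n z z')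
    (hmean : (∑' z : Z2, γ z * (z.1 : ℝ), ∑' z : Z2, γ z * (z.2 : ℝ)) ≠ (0, 0))
    -- (A2) the walk killed when leaving `K` is irreducible in `K`
    (hA2 : ∀ z z' : Z2, emb z ∈ K → emb z' ∈ K →
        ∃ n : ℕ, 0 < aliveP (twKer γ 0) (emb ⁻¹' K) n z z')
    -- (A3) the jump generating function is finite everywhere
    (hA3 : ∀ a : R2, Summable fun z : Z2 => γ z * Real.exp (dotR a (emb z)))
    -- (A4) the projections `fᵢ·S(n)` are aperiodic random walks
    (hA4 : ∀ i : Fin 2, ∀ d : ℕ,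
        (∀ n : ℕ, 0 < n →
          0 < ∑' z : Z2, (if dotR (f i) (emb z) = 0 then nstep (twKer γ 0) n 0 z else 0) →
          d ∣ n) → d = 1)
    (i : Fin 2)
    -- `a = a(cᵢ)`
    (a : R2) (haD : jgf γ a = 1) (haq : qmap γ a = c i)
    (z : Z2) (hz : emb z ∈ K) :
    exitTotal (twKer γ a) (emb ⁻¹' K) z = 1 ∧
    exitLExp (twKer γ 0) (emb ⁻¹' K) z
        (fun z' => Real.exp (dotR a (emb (z' - z)))) = 1 :=
  boundary_twisted_exit_prob_one_general γ c f K hγ0 hfUnit hperp hK hA1 hA3 i a haD haq z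

end KilledRW
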